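/- Let ι be a finite nonempty type, let x, x' : ι → ℝ³ be functions whose components all lie in the interval [−x_max, x_max] for some x_max ≥ 0, let Z, Z' be reals with 0 ≤ Z ≤ Z_max and 0 ≤ Z' ≤ Z_max, let Δ > 0, and fix a coordinate index j ∈ {1,2,3}. Let V be the diagonal matrix on ℂ^ι with entries V_{i,i} = Z·Z'·(x(i)_j − x'(i)_j)/((‖x(i) − x'(i)‖² + Δ²)^{3/2}), where ‖·‖ is the Euclidean norm on ℝ³. Let g_p be a positive integer, d_p ≥ 1 an integer, h_p > 0, and let D_p be the discrete derivative operator of order 2d_p with periodic boundary conditions on ℂ^{ℤ/g_pℤ} with grid spacing h_p. Then ‖V ⊗ D_p‖ ≤ (2·Z_max²·x_max/Δ³) · 2·(ln d_p + 1)/h_p. -/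

import Mathlib

open scoped Matrix.Norms.L2Operator Kronecker

/-- The central finite-difference coefficients `c_{d,k}` of order `2d`:
`c_{d,k} = (-1)^(k+1) · (d!)² / (k·(d-k)!·(d+k)!)` for `k ≠ 0`, and `c_{d,0} = 0`. -/
noncomputable def centralFDCoeff (d : ℕ) (k : ℤ) : ℝ :=
  if k = 0 then 0
  else (-1 : ℝ) ^ (k + 1) * ((d.factorial : ℝ)) ^ 2 /
    ((k : ℝ) * (((d : ℤ) - k).toNat.factorial : ℝ) * (((d : ℤ) + k).toNat.factorial : ℝ))

/-- The discrete derivative operator of order `2d` with periodic boundary conditions on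
`ℂ^{ℤ/gℤ}` with grid spacing `h`:  `D = (1/h)·Σ_x Σ_{k=-d}^{d} c_{d,k}·E_{x-k,x}`. -/
noncomputable def discreteDeriv (g : ℕ) [NeZero g] (h : ℝ) (d : ℕ) :
    Matrix (ZMod g) (ZMod g) ℂ :=
  ((1 / h : ℝ) : ℂ) •
    ∑ x : ZMod g, ∑ k ∈ Finset.Icc (-(d : ℤ)) (d : ℤ),
      ((centralFDCoeff d k : ℝ) : ℂ) • Matrix.single (x - (k : ZMod g)) x (1 : ℂ)

/-! The spectral norm is submultiplicative on Kronecker products, `‖A ⊗ B‖ ≤ ‖A‖ ‖B‖`, because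
`A ⊗ B = (A ⊗ 1)(1 ⊗ B)` and `A ↦ A ⊗ 1`, `B ↦ 1 ⊗ B` are star algebra homomorphisms of
C⋆-algebras, hence contractive. The diagonal Coulomb factor has norm `max_i |V_ii|`, and
`|V_ii| ≤ 2 Zmax² xmax / Δ³` since the denominator is at least `(Δ²)^{3/2}`. The derivative
operator is `1/h` times a combination of cyclic shifts, which are permutation matrices of norm
at most `1`, with coefficients `|c_{d,k}| ≤ 1/|k|` because `(d!)² ≤ (d-k)! (d+k)!` (the central
binomial coefficient is the largest); hence `‖D‖ ≤ 2 H_d / h ≤ 2 (ln d + 1) / h`. -/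

open Matrix

namespace Matrix

variable {R : Type*} [CommSemiring R] [StarRing R]
variable {m n : Type*} [Fintype m] [DecidableEq m] [Fintype n] [DecidableEq n]

def oneKroneckerStarAlgHom : Matrix m m R →⋆ₐ[R] Matrix (n × m) (n × m) R where
  toFun B := 1 ⊗ₖ B
  map_one' := one_kronecker_one
  map_mul' B B' := by rw [← mul_kronecker_mul, one_mul]
  map_zero' := kronecker_zero _
  map_add' := kronecker_add _
  commutes' c := by
    simp only [Algebra.algebraMap_eq_smul_one, kronecker_smul, one_kronecker_one]
  map_star' B := by simp [star_eq_conjTranspose, conjTranspose_kronecker]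

def kroneckerOneStarAlgHom : Matrix n n R →⋆ₐ[R] Matrix (n × m) (n × m) R where
  toFun A := A ⊗ₖ 1
  map_one' := one_kronecker_one
  map_mul' A A' := by rw [← mul_kronecker_mul, one_mul]
  map_zero' := zero_kronecker _
  map_add' A A' := add_kronecker _ _ _
  commutes' c := by
    simp only [Algebra.algebraMap_eq_smul_one, smul_kronecker, one_kronecker_one]
  map_star' A := by simp [star_eq_conjTranspose, conjTranspose_kronecker]

lemma l2_opNorm_kronecker_le (A : Matrix n n ℂ) (B : Matrix m m ℂ) :
    ‖A ⊗ₖ B‖ ≤ ‖A‖ * ‖B‖ := by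
  have hfactor : A ⊗ₖ B = (A ⊗ₖ 1) * (1 ⊗ₖ B) := by
    rw [← mul_kronecker_mul, mul_one, one_mul]
  rw [hfactor]
  exact (norm_mul_le _ _).trans <| mul_le_mul
    (NonUnitalStarAlgHom.norm_apply_le (kroneckerOneStarAlgHom (m := m)) A)
    (NonUnitalStarAlgHom.norm_apply_le (oneKroneckerStarAlgHom (n := n)) B)
    (norm_nonneg _) (norm_nonneg _)

end Matrix

lemma sum_single_sub_eq_permMatrix {R G : Type*} [Semiring R] [AddGroup G] [Fintype G]
    [DecidableEq G] (k : G) : ∑ x : G, single (x - k) x (1 : R) = (Equiv.addRight k).permMatrix R := by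
  ext a b
  simp [Matrix.sum_apply, single_apply, ite_and, PEquiv.toMatrix_apply, sub_eq_iff_eq_add]

lemma norm_discreteDeriv_le_sum (g : ℕ) [NeZero g] (d : ℕ) {h : ℝ} (hh : 0 < h) :
    ‖discreteDeriv g h d‖ ≤ (∑ k ∈ Finset.Icc (-(d : ℤ)) d, |centralFDCoeff d k|) / h := by
  have hsum : discreteDeriv g h d = ((1 / h : ℝ) : ℂ) • ∑ k ∈ Finset.Icc (-(d : ℤ)) d,
      ((centralFDCoeff d k : ℝ) : ℂ) • (Equiv.addRight (k : ZMod g)).permMatrix ℂ := by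
    simp only [discreteDeriv, Finset.sum_comm (s := Finset.univ), ← Finset.smul_sum,
      sum_single_sub_eq_permMatrix]
  rw [hsum, norm_smul, Complex.norm_real, Real.norm_of_nonneg (by positivity),
    one_div_mul_eq_div]
  gcongr
  refine (norm_sum_le _ _).trans (Finset.sum_le_sum fun k _ => ?_)
  rw [norm_smul, Complex.norm_real, Real.norm_eq_abs]
  exact mul_le_of_le_one_right (abs_nonneg _) (permMatrix_l2_opNorm_le _)

open Nat in
lemma Nat.factorial_mul_factorial_le_of_add_eq {d a b : ℕ} (hab : a + b = d + d) :
    d ! * d ! ≤ a ! * b ! := by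
  have hmiddle : (a + b).choose b ≤ (d + d).choose d := by
    simpa [hab, ← two_mul] using Nat.choose_le_middle b (a + b)
  have hfact : (d + d).choose d * (d ! * d !) = (a + b).choose b * (a ! * b !) := by
    rw [← mul_assoc, ← mul_assoc, add_choose_mul_factorial_mul_factorial,
      add_choose_mul_factorial_mul_factorial, hab]
  refine Nat.le_of_mul_le_mul_left ?_ (Nat.choose_pos (Nat.le_add_left d d))
  rw [hfact]
  exact Nat.mul_le_mul_right _ hmiddle

-- At `k = 0` both sides vanish, since `((0 : ℕ) : ℝ)⁻¹ = 0`.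
lemma abs_centralFDCoeff_le {d : ℕ} {k : ℤ} (hk : k ∈ Finset.Icc (-(d : ℤ)) d) :
    |centralFDCoeff d k| ≤ (k.natAbs : ℝ)⁻¹ := by
  rcases eq_or_ne k 0 with rfl | hk0
  · simp [centralFDCoeff]
  rw [Finset.mem_Icc] at hk
  have hfact : (d.factorial : ℝ) ^ 2 ≤
      ((d - k).toNat.factorial : ℝ) * ((d + k).toNat.factorial : ℝ) := by
    rw [sq]
    exact_mod_cast Nat.factorial_mul_factorial_le_of_add_eq (by omega)
  calc |centralFDCoeff d k|
      = (d.factorial : ℝ) ^ 2 /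
          (((d - k).toNat.factorial : ℝ) * ((d + k).toNat.factorial : ℝ)) * |(k : ℝ)|⁻¹ := by
        simp only [centralFDCoeff, if_neg hk0, abs_div, abs_mul, abs_neg_one_zpow, one_mul,
          abs_pow, Nat.abs_cast]
        field_simp
    _ ≤ 1 * |(k : ℝ)|⁻¹ := by gcongr; exact div_le_one_of_le₀ hfact (by positivity)
    _ = (k.natAbs : ℝ)⁻¹ := by rw [one_mul, Nat.cast_natAbs, Int.cast_abs]

lemma sum_Icc_inv_natAbs_eq_two_mul_harmonic (d : ℕ) :
    ∑ k ∈ Finset.Icc (-(d : ℤ)) d, (k.natAbs : ℝ)⁻¹ = 2 * harmonic d := by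
  induction d with
  | zero => simp
  | succ d ih =>
    have hIcc : Finset.Icc (-((d + 1 : ℕ) : ℤ)) (d + 1 : ℕ) =
        insert (-(d + 1 : ℤ)) (insert (d + 1 : ℤ) (Finset.Icc (-(d : ℤ)) d)) := by
      ext k
      simp only [Finset.mem_Icc, Finset.mem_insert]
      omega
    rw [hIcc, Finset.sum_insert (by simp only [Finset.mem_insert, Finset.mem_Icc]; omega),
      Finset.sum_insert (by simp), ih, harmonic_succ]
    push_cast
    rw [show (-(d + 1 : ℤ)).natAbs = d + 1 by omega, show (d + 1 : ℤ).natAbs = d + 1 by omega]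
    push_cast
    ring

lemma sum_abs_centralFDCoeff_le (d : ℕ) :
    ∑ k ∈ Finset.Icc (-(d : ℤ)) d, |centralFDCoeff d k| ≤ 2 * (Real.log d + 1) :=
  calc ∑ k ∈ Finset.Icc (-(d : ℤ)) d, |centralFDCoeff d k|
      ≤ ∑ k ∈ Finset.Icc (-(d : ℤ)) d, (k.natAbs : ℝ)⁻¹ :=
        Finset.sum_le_sum fun _ hk => abs_centralFDCoeff_le hk
    _ = 2 * harmonic d := sum_Icc_inv_natAbs_eq_two_mul_harmonic d
    _ ≤ 2 * (Real.log d + 1) := by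
        have := harmonic_le_one_add_log d
        linarith

lemma norm_discreteDeriv_le (g : ℕ) [NeZero g] (d : ℕ) {h : ℝ} (hh : 0 < h) :
    ‖discreteDeriv g h d‖ ≤ 2 * (Real.log d + 1) / h :=
  (norm_discreteDeriv_le_sum g d hh).trans (by gcongr; exact sum_abs_centralFDCoeff_le d)

lemma abs_div_rpow_three_halves_le {a b s Δ : ℝ} (hab : |a| ≤ b) (hs : 0 ≤ s) (hΔ : 0 < Δ) :
    |a / (s + Δ ^ 2) ^ ((3 : ℝ) / 2)| ≤ b / Δ ^ 3 := by
  have hΔ3 : Δ ^ 3 ≤ (s + Δ ^ 2) ^ ((3 : ℝ) / 2) :=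
    calc Δ ^ 3 = (Δ ^ 2) ^ ((3 : ℝ) / 2) := by
          rw [← Real.rpow_natCast Δ 2, ← Real.rpow_mul hΔ.le]; norm_num
      _ ≤ (s + Δ ^ 2) ^ ((3 : ℝ) / 2) := by gcongr; linarith
  rw [abs_div, abs_of_pos ((by positivity : (0 : ℝ) < Δ ^ 3).trans_le hΔ3)]
  exact div_le_div₀ ((abs_nonneg a).trans hab) hab (by positivity) hΔ3

lemma abs_mul_mul_sub_le {Z Z' Zmax t t' xmax : ℝ} (hZ0 : 0 ≤ Z) (hZ : Z ≤ Zmax)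
    (hZ'0 : 0 ≤ Z') (hZ' : Z' ≤ Zmax) (ht : |t| ≤ xmax) (ht' : |t'| ≤ xmax) :
    |Z * Z' * (t - t')| ≤ 2 * Zmax ^ 2 * xmax :=
  calc |Z * Z' * (t - t')| = Z * Z' * |t - t'| := by
        rw [abs_mul, abs_of_nonneg (mul_nonneg hZ0 hZ'0)]
    _ ≤ Zmax * Zmax * (xmax + xmax) :=
        mul_le_mul (mul_le_mul hZ hZ' hZ'0 (hZ0.trans hZ))
          ((abs_sub _ _).trans (add_le_add ht ht')) (abs_nonneg _)
          (mul_nonneg (hZ0.trans hZ) (hZ0.trans hZ))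
    _ = 2 * Zmax ^ 2 * xmax := by ring

theorem coulomb_force_norm_le_general (ι : Type*) [Fintype ι] [DecidableEq ι]
    (x x' : ι → EuclideanSpace ℝ (Fin 3)) (xmax : ℝ) (hxmax : 0 ≤ xmax)
    (hx : ∀ i j, |x i j| ≤ xmax) (hx' : ∀ i j, |x' i j| ≤ xmax)
    (Z Z' Zmax : ℝ) (hZ0 : 0 ≤ Z) (hZ : Z ≤ Zmax) (hZ'0 : 0 ≤ Z') (hZ' : Z' ≤ Zmax)
    (Δ : ℝ) (hΔ : 0 < Δ) (j : Fin 3)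
    (gp dp : ℕ) [NeZero gp] (hp : ℝ) (hhp : 0 < hp) :
    ‖Matrix.diagonal (fun i : ι =>
          ((Z * Z' * (x i j - x' i j) / ((‖x i - x' i‖ ^ 2 + Δ ^ 2) ^ ((3 : ℝ) / 2)) : ℝ) : ℂ))
        ⊗ₖ discreteDeriv gp hp dp‖ ≤
      (2 * Zmax ^ 2 * xmax / Δ ^ 3) * (2 * (Real.log dp + 1) / hp) := by
  have hforce : ‖fun i : ι =>
      ((Z * Z' * (x i j - x' i j) / ((‖x i - x' i‖ ^ 2 + Δ ^ 2) ^ ((3 : ℝ) / 2)) : ℝ) : ℂ)‖ ≤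
        2 * Zmax ^ 2 * xmax / Δ ^ 3 := by
    have hZmax : 0 ≤ Zmax := hZ0.trans hZ
    refine (pi_norm_le_iff_of_nonneg (by positivity)).2 fun i => ?_
    rw [Complex.norm_real, Real.norm_eq_abs]
    exact abs_div_rpow_three_halves_le
      (abs_mul_mul_sub_le hZ0 hZ hZ'0 hZ' (hx i j) (hx' i j)) (sq_nonneg _) hΔ
  calc _ ≤ ‖Matrix.diagonal _‖ * ‖discreteDeriv gp hp dp‖ := l2_opNorm_kronecker_le _ _
    _ ≤ _ := by
        rw [l2_opNorm_diagonal]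
        exact mul_le_mul hforce (norm_discreteDeriv_le gp dp hhp) (norm_nonneg _)
          ((norm_nonneg _).trans hforce)

/-- **Spectral norm bound on the classical Coulomb-force Liouvillian term**
`V^{class}_{n,n',j} = V ⊗ D_p`, with `V` the diagonal matrix of the regularized Coulomb force:
`‖V ⊗ D_p‖ ≤ (2·Z_max²·x_max/Δ³)·2·(ln d_p + 1)/h_p`. -/
theorem coulomb_force_norm_le (ι : Type*) [Fintype ι] [Nonempty ι] [DecidableEq ι]
    (x x' : ι → EuclideanSpace ℝ (Fin 3)) (xmax : ℝ) (hxmax : 0 ≤ xmax)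
    (hx : ∀ i j, |x i j| ≤ xmax) (hx' : ∀ i j, |x' i j| ≤ xmax)
    (Z Z' Zmax : ℝ) (hZ0 : 0 ≤ Z) (hZ : Z ≤ Zmax) (hZ'0 : 0 ≤ Z') (hZ' : Z' ≤ Zmax)
    (Δ : ℝ) (hΔ : 0 < Δ) (j : Fin 3)
    (gp dp : ℕ) [NeZero gp] (hdp : 1 ≤ dp) (hp : ℝ) (hhp : 0 < hp) :
    ‖Matrix.diagonal (fun i : ι =>
          ((Z * Z' * (x i j - x' i j) / ((‖x i - x' i‖ ^ 2 + Δ ^ 2) ^ ((3 : ℝ) / 2)) : ℝ) : ℂ))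
        ⊗ₖ discreteDeriv gp hp dp‖ ≤
      (2 * Zmax ^ 2 * xmax / Δ ^ 3) * (2 * (Real.log dp + 1) / hp) :=
  coulomb_force_norm_le_general ι x x' xmax hxmax hx hx' Z Z' Zmax hZ0 hZ hZ'0 hZ' Δ hΔ j gp dp hp
    hhp
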